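/- arXiv:1801.09380 — 2 statements merged into one kernel-verified Lean document; each statement's English description precedes it below -/
import Mathlib

section
/- Let G be an abelian topological group such that for each countable subgroup H of G, the subspace topology on H is finer than the Bohr topology of H. Then every countable subgroup of G is closed in G. -/
/-- The Bohr topology of an abelian group. -/
noncomputable def bohrTopology (A : Type*) [AddCommGroup A] : TopologicalSpace A :=
  ⨅ φ : A →+ AddCircle (1 : ℝ), TopologicalSpace.induced φ inferInstance

open Topology

/-! Let `x` lie in the closure of a countable subgroup `H`. The subgroup `K` generated by `H` and
`x` is still countable, so its subspace topology is finer than its Bohr topology. In the Bohr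
topology every subgroup is closed: characters into `ℝ/ℤ` separate the points of `K ⧸ H` (already
those into `ℚ/ℤ` do, `ℚ/ℤ` being an injective cogenerator), so `H` is the intersection of the
kernels of the characters of `K` vanishing on `H`. Hence `H` is closed in `K`, and `x ∈ H`. -/

noncomputable def ratCircleToRealCircle : AddCircle (1 : ℚ) →+ AddCircle (1 : ℝ) :=
  QuotientAddGroup.map _ _ (Rat.castHom ℝ).toAddMonoidHom
    (AddSubgroup.zmultiples_le.mpr (by simp))

lemma ratCircleToRealCircle_injective : Function.Injective ratCircleToRealCircle := by
  refine (injective_iff_map_eq_zero _).mpr fun a ha => ?_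
  induction a using QuotientAddGroup.induction_on with | H q =>
  simp only [ratCircleToRealCircle, QuotientAddGroup.map_mk, QuotientAddGroup.eq_zero_iff,
    AddSubgroup.mem_zmultiples_iff, zsmul_one, RingHom.toAddMonoidHom_eq_coe,
    AddMonoidHom.coe_coe, Rat.coe_castHom] at ha ⊢
  obtain ⟨k, hk⟩ := ha
  exact ⟨k, by exact_mod_cast hk⟩

section Characters

variable {A : Type*} [AddCommGroup A]

lemma exists_addCircle_hom_apply_ne_zero {a : A} (ha : a ≠ 0) :
    ∃ φ : A →+ AddCircle (1 : ℝ), φ a ≠ 0 := by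
  obtain ⟨c, hc⟩ := CharacterModule.exists_character_apply_ne_zero_of_ne_zero ha
  exact ⟨ratCircleToRealCircle.comp c,
    (map_ne_zero_iff _ ratCircleToRealCircle_injective).mpr hc⟩

lemma AddSubgroup.exists_addCircle_hom_le_ker_apply_ne_zero (H : AddSubgroup A) {a : A}
    (ha : a ∉ H) : ∃ φ : A →+ AddCircle (1 : ℝ), H ≤ φ.ker ∧ φ a ≠ 0 := by
  have hmk : (a : A ⧸ H) ≠ 0 := by rwa [Ne, QuotientAddGroup.eq_zero_iff]
  obtain ⟨φ, hφ⟩ := exists_addCircle_hom_apply_ne_zero hmk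
  refine ⟨φ.comp (QuotientAddGroup.mk' H), fun b hb => ?_, hφ⟩
  simp [AddMonoidHom.mem_ker, (QuotientAddGroup.eq_zero_iff b).mpr hb]

lemma continuous_bohrTopology (φ : A →+ AddCircle (1 : ℝ)) :
    Continuous[bohrTopology A, inferInstance] φ :=
  continuous_iff_le_induced.mpr (iInf_le _ φ)

lemma AddSubgroup.isClosed_bohrTopology (H : AddSubgroup A) :
    IsClosed[bohrTopology A] (H : Set A) := by
  let := bohrTopology A
  refine isOpen_compl_iff.mp (isOpen_iff_forall_mem_open.mpr fun a ha => ?_)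
  obtain ⟨φ, hH, hφ⟩ := H.exists_addCircle_hom_le_ker_apply_ne_zero ha
  exact ⟨φ ⁻¹' {0}ᶜ, fun b hb hbH => hb (hH hbH),
    isOpen_compl_singleton.preimage (continuous_bohrTopology φ), hφ⟩

end Characters

lemma AddSubgroup.countable_sup_zmultiples {G : Type*} [AddCommGroup G] {H : AddSubgroup G}
    (hH : (H : Set G).Countable) (x : G) :
    ((H ⊔ AddSubgroup.zmultiples x : AddSubgroup G) : Set G).Countable := by
  rw [AddSubgroup.add_normal]
  exact hH.image2 (Set.countable_range (· • x : ℤ → G)) _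

lemma AddSubgroup.mem_of_mem_closure_of_isClosed_addSubgroupOf {G : Type*} [AddGroup G]
    [TopologicalSpace G] {H K : AddSubgroup G} (hHK : H ≤ K)
    (hH : IsClosed (H.addSubgroupOf K : Set K)) {x : G} (hxK : x ∈ K)
    (hx : x ∈ _root_.closure (H : Set G)) : x ∈ H := by
  have hx' : (⟨x, hxK⟩ : K) ∈ _root_.closure (H.addSubgroupOf K : Set K) := by
    rwa [closure_subtype, AddSubgroup.coe_addSubgroupOf, AddSubgroup.coe_subtype,
      Set.image_preimage_eq_inter_range, Subtype.range_coe_subtype,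
      Set.inter_eq_left.mpr (show (H : Set G) ⊆ {x | x ∈ K} from hHK)]
  exact AddSubgroup.mem_addSubgroupOf.mp (hH.closure_eq ▸ hx')

theorem countable_subgroups_closed_general {G : Type*} [AddCommGroup G]
    [TopologicalSpace G]
    (h : ∀ H : AddSubgroup G, (H : Set G).Countable →
      (inferInstance : TopologicalSpace H) ≤ bohrTopology H) :
    ∀ H : AddSubgroup G, (H : Set G).Countable → IsClosed (H : Set G) := by
  intro H hH
  refine isClosed_of_closure_subset fun x hx => ?_
  set K : AddSubgroup G := H ⊔ AddSubgroup.zmultiples x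
  have hHK : IsClosed (H.addSubgroupOf K : Set K) :=
    (AddSubgroup.isClosed_bohrTopology _).mono (h K (AddSubgroup.countable_sup_zmultiples hH x))
  exact AddSubgroup.mem_of_mem_closure_of_isClosed_addSubgroupOf le_sup_left hHK
    (AddSubgroup.mem_sup_right (AddSubgroup.mem_zmultiples x)) hx

/-- If the subspace topology on every countable subgroup of an abelian
topological group `G` is finer than its Bohr topology, then every countable
subgroup of `G` is closed in `G`. -/
theorem countable_subgroups_closed {G : Type*} [AddCommGroup G]
    [TopologicalSpace G] [IsTopologicalAddGroup G] [T2Space G]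
    (h : ∀ H : AddSubgroup G, (H : Set G).Countable →
      (inferInstance : TopologicalSpace H) ≤ bohrTopology H) :
    ∀ H : AddSubgroup G, (H : Set G).Countable → IsClosed (H : Set G) :=
  countable_subgroups_closed_general h
end

section
/- Let G be an infinite Boolean Hausdorff topological group all of whose countable subgroups are h-embedded in G. Then G is not selectively pseudocompact. -/
/-- A space is selectively pseudocompact if every sequence of non-empty open
sets admits a selection with an accumulation point. -/
def SelectivelyPseudocompact (X : Type*) [TopologicalSpace X] : Prop :=
  ∀ U : ℕ → Set X, (∀ n, IsOpen (U n) ∧ (U n).Nonempty) →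
    ∃ x : ℕ → X, (∀ n, x n ∈ U n) ∧
      ∃ p : X, ∀ V ∈ nhds p, {n : ℕ | x n ∈ V}.Infinite

noncomputable section SPaux

private def SPhalf : AddCircle (1 : ℝ) := ((1/2 : ℝ) : AddCircle (1 : ℝ))

private lemma SPhalf_ne_zero : SPhalf ≠ 0 := by
  rw [SPhalf, Ne, AddCircle.coe_eq_zero_iff]
  rintro ⟨n, hn⟩
  have h1 : (n : ℝ) = 1/2 := by simpa using hn
  rcases le_or_gt n 0 with h | h
  · have : (n:ℝ) ≤ 0 := by exact_mod_cast h
    linarith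
  · have : (1:ℝ) ≤ n := by exact_mod_cast h
    linarith

private lemma SPtwo_torsion (y : AddCircle (1 : ℝ)) (hy : y + y = 0) :
    y = 0 ∨ y = SPhalf := by
  induction y using QuotientAddGroup.induction_on with
  | H r =>
  have hrr : ((r + r : ℝ) : AddCircle (1:ℝ)) = 0 := by
    rw [QuotientAddGroup.mk_add]; exact hy
  rw [AddCircle.coe_eq_zero_iff] at hrr
  obtain ⟨n, hn⟩ := hrr
  have hn' : (n : ℝ) = r + r := by simpa using hn
  rcases Int.even_or_odd n with ⟨k, hk⟩ | ⟨k, hk⟩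
  · left
    rw [AddCircle.coe_eq_zero_iff]
    refine ⟨k, ?_⟩
    have : ((k : ℝ) + k = r + r) := by rw [← hn', hk]; push_cast; ring
    simpa using (by linarith : (k : ℝ) = r)
  · right
    rw [SPhalf, ← sub_eq_zero, ← QuotientAddGroup.mk_sub, AddCircle.coe_eq_zero_iff]
    refine ⟨k, ?_⟩
    have : ((2*k : ℝ) + 1 = r + r) := by rw [← hn', hk]; push_cast; ring
    simpa using (by linarith : (k : ℝ) = r - 1/2)

private def SPiota : ZMod 2 →+ AddCircle (1 : ℝ) :=
  ZMod.lift 2 ⟨zmultiplesHom _ SPhalf, by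
    simp only [zmultiplesHom_apply, SPhalf]
    have h2 : ((2:ℕ):ℤ) • (((1/2 : ℝ)) : AddCircle (1:ℝ)) =
        ((1/2 : ℝ) : AddCircle (1:ℝ)) + ((1/2 : ℝ) : AddCircle (1:ℝ)) := by
      push_cast
      rw [two_smul]
    rw [h2, ← QuotientAddGroup.mk_add, AddCircle.coe_eq_zero_iff]
    exact ⟨1, by norm_num⟩⟩

private lemma SPiota_one : SPiota (1 : ZMod 2) = SPhalf := by
  have h : ((1 : ℤ) : ZMod 2) = 1 := by norm_cast
  rw [SPiota, ← h, ZMod.lift_coe]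
  simp [zmultiplesHom_apply, SPhalf]

/-- countability of the span of the range of a countable family -/
private lemma SPcountable_span {G : Type*} [AddCommGroup G] [Module (ZMod 2) G]
    {ι : Type*} [Countable ι] (v : ι → G) :
    ((Submodule.span (ZMod 2) (Set.range v) : Submodule (ZMod 2) G) : Set G).Countable := by
  rw [← Finsupp.range_linearCombination, LinearMap.coe_range]
  exact Set.countable_range _

/-- restriction of a linear functional on a submodule, as a homomorphism into the circle -/
private def SPhom {G : Type*} [AddCommGroup G] [Module (ZMod 2) G]
    (M : Submodule (ZMod 2) G) (F : M →ₗ[ZMod 2] ZMod 2) :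
    M.toAddSubgroup →+ AddCircle (1 : ℝ) :=
  SPiota.comp (F.toAddMonoidHom.comp
    (AddMonoidHom.mk' (fun z => (⟨z.1, z.2⟩ : M)) (fun _ _ => rfl)))

private lemma SPhom_apply {G : Type*} [AddCommGroup G] [Module (ZMod 2) G]
    (M : Submodule (ZMod 2) G) (F : M →ₗ[ZMod 2] ZMod 2) (z : M.toAddSubgroup) :
    SPhom M F z = SPiota (F ⟨z.1, z.2⟩) := rfl

private lemma SPzmod_cases : ∀ a : ZMod 2, a = 0 ∨ a = 1 := by decide

end SPaux

/-- An infinite Boolean Hausdorff topological group all of whose countable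
subgroups are h-embedded is not selectively pseudocompact. -/
theorem not_selectivelyPseudocompact_of_h_embedded {G : Type*} [AddCommGroup G]
    [TopologicalSpace G] [IsTopologicalAddGroup G] [T2Space G] [Infinite G]
    (hB : ∀ x : G, x + x = 0)
    (h : ∀ H : AddSubgroup G, (H : Set G).Countable →
      ∀ φ : H →+ AddCircle (1 : ℝ), ∃ ψ : G →+ AddCircle (1 : ℝ),
        Continuous ψ ∧ ∀ x : H, ψ x = φ x) :
    ¬ SelectivelyPseudocompact G := by
  classical
  intro hsp
  letI : Module (ZMod 2) G := AddCommGroup.zmodModule (n := 2)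
    (fun x => by rw [two_nsmul]; exact hB x)
  haveI : Fact (Nat.Prime 2) := ⟨Nat.prime_two⟩
  set B := Module.Basis.ofVectorSpace (ZMod 2) G with hBdef
  haveI : Infinite (Module.Basis.ofVectorSpaceIndex (ZMod 2) G) := by
    rw [Set.infinite_coe_iff]
    intro hfin
    haveI := hfin.to_subtype
    haveI : Finite G := Finite.of_injective
      (fun a => ((B.repr a : _ →₀ ZMod 2) : _ → ZMod 2))
      (fun a b hab => B.repr.injective (DFunLike.coe_injective hab))
    exact not_finite G
  let e := Infinite.natEmbedding (Module.Basis.ofVectorSpaceIndex (ZMod 2) G)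
  let g : ℕ → G := fun n => B (e n)
  have hg : ∀ j n : ℕ, (B.coord (e j)) (g n) = if j = n then 1 else 0 := by
    intro j n
    simp only [g, Module.Basis.coord_apply, Module.Basis.repr_self]
    rw [Finsupp.single_apply]
    simp [eq_comm, e.injective.eq_iff]
  -- the countable subgroup generated by the `g n`, and the coordinate characters
  set M0 : Submodule (ZMod 2) G := Submodule.span (ZMod 2) (Set.range g) with hM0
  have hgM0 : ∀ n, g n ∈ M0 := fun n =>
    Submodule.subset_span (Set.mem_range_self n)
  have hψ : ∀ j : ℕ, ∃ ψ : G →+ AddCircle (1 : ℝ), Continuous ψ ∧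
      ∀ z : M0.toAddSubgroup, ψ z = SPiota ((B.coord (e j)).domRestrict M0 ⟨z.1, z.2⟩) := by
    intro j
    obtain ⟨ψ, hc, ha⟩ := h M0.toAddSubgroup (SPcountable_span g)
      (SPhom M0 ((B.coord (e j)).domRestrict M0))
    exact ⟨ψ, hc, fun z => by rw [ha z, SPhom_apply]⟩
  choose ψ hψcont hψagree using hψ
  -- every value of every `ψ j` is `0` or `SPhalf`
  have htor : ∀ (j : ℕ) (y : G), ψ j y = 0 ∨ ψ j y = SPhalf := by
    intro j y
    refine SPtwo_torsion _ ?_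
    rw [← map_add, hB y, map_zero]
  have hψg : ∀ j n : ℕ, ψ j (g n) = if j = n then SPhalf else 0 := by
    intro j n
    have := hψagree j ⟨g n, hgM0 n⟩
    rw [this]
    have : ((B.coord (e j)).domRestrict M0) ⟨g n, hgM0 n⟩ = if j = n then 1 else 0 := by
      rw [LinearMap.domRestrict_apply, hg]
    rw [this]
    by_cases hjn : j = n <;> simp [hjn, SPiota_one]
  -- the open sets
  set U : ℕ → Set G := fun n =>
    ((ψ n) ⁻¹' {(0 : AddCircle (1:ℝ))}ᶜ) ∩
      ⋂ j ∈ Finset.range n, (ψ j) ⁻¹' {SPhalf}ᶜ with hU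
  have hUopen : ∀ n, IsOpen (U n) ∧ (U n).Nonempty := by
    intro n
    constructor
    · refine IsOpen.inter (isOpen_compl_singleton.preimage (hψcont n)) ?_
      exact isOpen_biInter_finset (fun j _ => isOpen_compl_singleton.preimage (hψcont j))
    · refine ⟨g n, ?_, ?_⟩
      · simp only [Set.mem_preimage, Set.mem_compl_iff, Set.mem_singleton_iff]
        rw [hψg n n]
        simp [SPhalf_ne_zero]
      · simp only [Set.mem_iInter, Finset.mem_range]
        intro j hj
        simp only [Set.mem_preimage, Set.mem_compl_iff, Set.mem_singleton_iff]
        rw [hψg j n]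
        simp only [Nat.ne_of_lt hj, if_false]
        exact fun h0 => SPhalf_ne_zero h0.symm
  obtain ⟨x, hxU, p, hacc⟩ := hsp U hUopen
  -- key facts about the selection
  have hK1 : ∀ n, ψ n (x n) = SPhalf := by
    intro n
    have := (hxU n).1
    simp only [Set.mem_preimage, Set.mem_compl_iff, Set.mem_singleton_iff] at this
    rcases htor n (x n) with h0 | h0
    · exact absurd h0 this
    · exact h0
  have hK2 : ∀ j i : ℕ, j < i → ψ j (x i) = 0 := by
    intro j i hji
    have := (hxU i).2
    simp only [Set.mem_iInter, Finset.mem_range] at this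
    have h2 := this j hji
    simp only [Set.mem_preimage, Set.mem_compl_iff, Set.mem_singleton_iff] at h2
    rcases htor j (x i) with h0 | h0
    · exact h0
    · exact absurd h0 h2
  -- linear independence of the selection
  have hxind : LinearIndependent (ZMod 2) x := by
    rw [linearIndependent_iff]
    intro l hl
    by_contra hlne
    have hsupp : l.support.Nonempty := Finsupp.support_nonempty_iff.2 hlne
    set m := l.support.min' hsupp with hm
    have hmem : m ∈ l.support := l.support.min'_mem hsupp
    have : ψ m (Finsupp.linearCombination (ZMod 2) x l) = SPhalf := by
      rw [Finsupp.linearCombination_apply, Finsupp.sum, map_sum]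
      have hterm : ∀ i ∈ l.support, ψ m (l i • x i) = if i = m then SPhalf else 0 := by
        intro i hi
        have hli : l i = 1 := by
          rcases SPzmod_cases (l i) with h0 | h1
          · exact absurd h0 (Finsupp.mem_support_iff.1 hi)
          · exact h1
        rw [hli, one_smul]
        by_cases him : i = m
        · rw [him, hK1, if_pos rfl]
        · have : m < i := lt_of_le_of_ne (l.support.min'_le i hi) (Ne.symm him)
          rw [hK2 m i this, if_neg him]
      rw [Finset.sum_congr rfl hterm, Finset.sum_ite_eq' l.support m (fun _ => SPhalf),
        if_pos hmem]
    rw [hl, map_zero] at this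
    exact SPhalf_ne_zero this.symm
  -- construct the separating character
  have hsep : ∃ (Ha : AddSubgroup G) (_ : (Ha : Set G).Countable)
      (φ : Ha →+ AddCircle (1:ℝ)) (A : Finset ℕ) (hpH : p ∈ Ha) (hxH : ∀ n, x n ∈ Ha),
      φ ⟨p, hpH⟩ = 0 ∧ ∀ n ∉ A, φ ⟨x n, hxH n⟩ = SPhalf := by
    by_cases hpspan : p ∈ Submodule.span (ZMod 2) (Set.range x)
    · -- p is a combination of the x n
      obtain ⟨c, hc⟩ := Finsupp.mem_span_range_iff_exists_finsupp.1 hpspan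
      set M : Submodule (ZMod 2) G := Submodule.span (ZMod 2) (Set.range x) with hM
      let Bx : Module.Basis ℕ (ZMod 2) M := Module.Basis.span hxind
      have hBx : ∀ n, (Bx n : G) = x n := fun n => congrArg Subtype.val (Module.Basis.span_apply hxind n)
      let F : M →ₗ[ZMod 2] ZMod 2 :=
        Bx.constr ℕ (fun n => if n ∈ c.support then 0 else 1)
      have hxM : ∀ n, x n ∈ M := fun n => Submodule.subset_span (Set.mem_range_self n)
      have hFx : ∀ n, F ⟨x n, hxM n⟩ = if n ∈ c.support then 0 else 1 := by
        intro n
        have : (⟨x n, hxM n⟩ : M) = Bx n := by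
          apply Subtype.ext; rw [hBx]
        rw [this, Module.Basis.constr_basis]
      have hFp : F ⟨p, hpspan⟩ = 0 := by
        have hq : (⟨p, hpspan⟩ : M) = c.sum fun i a => a • (⟨x i, hxM i⟩ : M) := by
          apply Subtype.ext
          have hcoe := map_finsuppSum M.subtype c (fun i a => a • (⟨x i, hxM i⟩ : M))
          simp only [map_smul, Submodule.coe_subtype] at hcoe
          rw [hcoe]
          exact hc.symm
        rw [hq, map_finsuppSum]
        refine Finset.sum_eq_zero ?_
        intro i hi
        show F (c i • (⟨x i, hxM i⟩ : M)) = 0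
        rw [map_smul, hFx, if_pos hi, smul_zero]
      refine ⟨M.toAddSubgroup, SPcountable_span x, SPhom M F, c.support, hpspan, hxM, ?_, ?_⟩
      · rw [SPhom_apply]
        rw [show (⟨(⟨p, hpspan⟩ : M.toAddSubgroup).1, _⟩ : M) = ⟨p, hpspan⟩ from rfl]
        rw [hFp, map_zero]
      · intro n hn
        rw [SPhom_apply]
        rw [show (⟨(⟨x n, hxM n⟩ : M.toAddSubgroup).1, _⟩ : M) = ⟨x n, hxM n⟩ from rfl]
        rw [hFx, if_neg hn, SPiota_one]
    · -- p is independent from the x n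
      set v : Option ℕ → G := fun o => Option.casesOn' o p x with hv
      have hvind : LinearIndependent (ZMod 2) v := hxind.option hpspan
      set M : Submodule (ZMod 2) G := Submodule.span (ZMod 2) (Set.range v) with hM
      let Bv : Module.Basis (Option ℕ) (ZMod 2) M := Module.Basis.span hvind
      have hBv : ∀ o, (Bv o : G) = v o := fun o => congrArg Subtype.val (Module.Basis.span_apply hvind o)
      let F : M →ₗ[ZMod 2] ZMod 2 :=
        Bv.constr ℕ (fun o => Option.casesOn' o 0 (fun _ => 1))
      have hvM : ∀ o, v o ∈ M := fun o => Submodule.subset_span (Set.mem_range_self o)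
      have hpM : p ∈ M := hvM none
      have hxM : ∀ n, x n ∈ M := fun n => hvM (some n)
      have hFv : ∀ o, F ⟨v o, hvM o⟩ = Option.casesOn' o 0 (fun _ => 1) := by
        intro o
        have : (⟨v o, hvM o⟩ : M) = Bv o := by
          apply Subtype.ext; rw [hBv]
        rw [this, Module.Basis.constr_basis]
      refine ⟨M.toAddSubgroup, SPcountable_span v, SPhom M F, ∅, hpM, hxM, ?_, ?_⟩
      · rw [SPhom_apply]
        rw [show (⟨(⟨p, hpM⟩ : M.toAddSubgroup).1, _⟩ : M) = ⟨v none, hvM none⟩ from rfl]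
        rw [hFv]
        simp [Option.casesOn']
      · intro n _
        rw [SPhom_apply]
        rw [show (⟨(⟨x n, hxM n⟩ : M.toAddSubgroup).1, _⟩ : M) = ⟨v (some n), hvM (some n)⟩
          from rfl]
        rw [hFv]
        simp [Option.casesOn', SPiota_one]
  obtain ⟨Ha, hHacount, φ, A, hpH, hxH, hφp, hφx⟩ := hsep
  obtain ⟨Ψ, hΨcont, hΨagree⟩ := h Ha hHacount φ
  have hΨp : Ψ p = 0 := by rw [hΨagree ⟨p, hpH⟩, hφp]
  have hΨx : ∀ n ∉ A, Ψ (x n) = SPhalf := by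
    intro n hn
    rw [hΨagree ⟨x n, hxH n⟩, hφx n hn]
  -- the contradiction with the accumulation point
  set V : Set G := Ψ ⁻¹' {SPhalf}ᶜ with hV
  have hVnhds : V ∈ nhds p := by
    refine IsOpen.mem_nhds (isOpen_compl_singleton.preimage hΨcont) ?_
    simp only [V, Set.mem_preimage, Set.mem_compl_iff, Set.mem_singleton_iff, hΨp]
    exact fun h0 => SPhalf_ne_zero h0.symm
  have hinf := hacc V hVnhds
  have hsub : {n : ℕ | x n ∈ V} ⊆ (A : Set ℕ) := by
    intro n hn
    by_contra hnA
    have := hΨx n hnA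
    simp only [Set.mem_setOf_eq, V, Set.mem_preimage, Set.mem_compl_iff,
      Set.mem_singleton_iff] at hn
    exact hn this
  exact hinf (Set.Finite.subset (A.finite_toSet) hsub)
end
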